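/- arXiv:2001.04669 — 4 statements merged into one kernel-verified Lean document; each statement's English description precedes it below -/
import Mathlib

section
/- Let B be a transition-based generalized Büchi automaton with accepting sets F_1,…,F_n, and let B̄ be its augmented automaton whose states are pairs (x,v) of a state of B and a binary memory vector v ∈ {0,1}^n, with initial state (x_init, 0), transitions ((x,v),σ,(x',v')) whenever (x,σ,x') is a transition of B and v' = reset(Max(v, visitf(x,σ,x'))), and accepting sets F̄_j = {((x,v),σ,(x',v')) : (x,σ,x') ∈ F_j and v_j = 0}. Then every infinite word accepted by B is accepted by B̄. -/
-- Reset function on memory vectors (subsets of `Fin n`): maps the all-ones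
-- vector (`Set.univ`) to the all-zeros vector (`∅`), identity otherwise.
open Classical in
noncomputable def reset {n : ℕ} (v : Set (Fin n)) : Set (Fin n) :=
  if v = Set.univ then ∅ else v

/-- A transition-based generalized Büchi automaton with `n` accepting sets. -/
structure TGBA (X A : Type) (n : ℕ) where
  init : X
  trans : Set (X × A × X)
  acc : Fin n → Set (X × A × X)

/-- `visitf e` is the memory vector whose `j`-th entry is 1 iff `e ∈ F j`. -/
def visitf {X A : Type} {n : ℕ} (B : TGBA X A n) (e : X × A × X) : Set (Fin n) :=
  {j | e ∈ B.acc j}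

/-- The augmented automaton of a tGBA: states are pairs of a state and a
memory vector, the memory is updated by `reset (Max (v, visitf e))`, and
the `j`-th accepting set consists of the augmented transitions whose
underlying transition is in `F j` and whose memory has `j`-th entry 0. -/
noncomputable def TGBA.aug {X A : Type} {n : ℕ} (B : TGBA X A n) :
    TGBA (X × Set (Fin n)) A n where
  init := (B.init, ∅)
  trans := {t | (t.1.1, t.2.1, t.2.2.1) ∈ B.trans ∧
    t.2.2.2 = reset (t.1.2 ∪ visitf B (t.1.1, t.2.1, t.2.2.1))}
  acc := fun j => {t | ((t.1.1, t.2.1, t.2.2.1) ∈ B.trans ∧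
    t.2.2.2 = reset (t.1.2 ∪ visitf B (t.1.1, t.2.1, t.2.2.1))) ∧
    (t.1.1, t.2.1, t.2.2.1) ∈ B.acc j ∧ j ∉ t.1.2}

/-- Acceptance of an infinite word: some infinite run from the initial state
takes, for each `j`, transitions in the `j`-th accepting set infinitely often. -/
def TGBA.Accepts {X A : Type} {n : ℕ} (B : TGBA X A n) (w : ℕ → A) : Prop :=
  ∃ r : ℕ → X, r 0 = B.init ∧ (∀ k, (r k, w k, r (k + 1)) ∈ B.trans) ∧
    ∀ j : Fin n, ∀ N : ℕ, ∃ k ≥ N, (r k, w k, r (k + 1)) ∈ B.acc j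

lemma reset_subset {n : ℕ} (v : Set (Fin n)) : reset v ⊆ v := by
  unfold reset
  split
  · exact Set.empty_subset _
  · exact subset_rfl

/-- every infinite word accepted by a tGBA `B` is accepted by
its augmented automaton `B.aug`. -/
theorem accepted_by_aug_of_accepted {X A : Type} {n : ℕ} (B : TGBA X A n)
    (w : ℕ → A) (h : B.Accepts w) : B.aug.Accepts w := by
  classical
  obtain ⟨r, hr0, htr, hacc⟩ := h
  set v : ℕ → Set (Fin n) := fun k =>
    Nat.rec ∅ (fun k vk => reset (vk ∪ visitf B (r k, w k, r (k + 1)))) k with hv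
  have hv0 : v 0 = ∅ := rfl
  have hvs : ∀ k, v (k + 1) = reset (v k ∪ visitf B (r k, w k, r (k + 1))) :=
    fun k => rfl
  -- resets happen infinitely often: v k = ∅ for arbitrarily large k
  have hreset : ∀ N : ℕ, ∃ k ≥ N, v k = ∅ := by
    intro N
    by_contra hcon
    push_neg at hcon
    -- monotone from N on
    have hmono : ∀ k ≥ N, v k ⊆ v (k + 1) ∧
        visitf B (r k, w k, r (k + 1)) ⊆ v (k + 1) := by
      intro k hk
      have hne : v (k + 1) ≠ ∅ := (hcon (k + 1) (Nat.le_succ_of_le hk)).ne_empty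
      rw [hvs k] at hne ⊢
      unfold reset at hne ⊢
      split at hne
      · simp at hne
      · rename_i hnu
        rw [if_neg hnu]
        exact ⟨Set.subset_union_left, Set.subset_union_right⟩
    have hmono' : ∀ k m, N ≤ k → k ≤ m → v k ⊆ v m := by
      intro k m hk hkm
      induction m with
      | zero =>
        have : k = 0 := Nat.le_zero.mp hkm
        subst this; exact subset_rfl
      | succ m ih =>
        rcases Nat.lt_or_ge k (m + 1) with hlt | hge
        · have hkm' : k ≤ m := Nat.lt_succ_iff.mp hlt
          exact (ih hkm').trans (hmono m (hk.trans hkm')).1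
        · have : k = m + 1 := le_antisymm hkm hge
          subst this; exact subset_rfl
    -- each j is eventually in v
    have hj : ∀ j : Fin n, ∃ k ≥ N, j ∈ v k := by
      intro j
      obtain ⟨k, hk, hkacc⟩ := hacc j N
      exact ⟨k + 1, Nat.le_succ_of_le hk, (hmono k hk).2 hkacc⟩
    choose f hf1 hf2 using hj
    set M : ℕ := N + (Finset.univ : Finset (Fin n)).sup f with hM
    have hMN : N ≤ M := Nat.le_add_right _ _
    have hMuniv : v M = Set.univ := by
      apply Set.eq_univ_of_forall
      intro j
      have hfj : f j ≤ M := by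
        have := Finset.le_sup (f := f) (Finset.mem_univ j)
        omega
      exact hmono' (f j) M (hf1 j) hfj (hf2 j)
    have : v (M + 1) = ∅ := by
      rw [hvs M]
      unfold reset
      rw [if_pos]
      rw [hMuniv]
      simp
    exact (hcon (M + 1) (Nat.le_succ_of_le hMN)).ne_empty this
  refine ⟨fun k => (r k, v k), ?_, ?_, ?_⟩
  · show (r 0, v 0) = (B.init, ∅)
    rw [hr0, hv0]
  · intro k
    exact ⟨htr k, hvs k⟩
  · intro j N
    obtain ⟨k₀, hk₀N, hk₀⟩ := hreset N
    -- minimal k ≥ k₀ with transition in acc j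
    have hex : ∃ k, k ≥ k₀ ∧ (r k, w k, r (k + 1)) ∈ B.acc j := hacc j k₀
    set k := Nat.find hex with hkdef
    obtain ⟨hkk₀, hkacc⟩ := Nat.find_spec hex
    have hmin : ∀ m, k₀ ≤ m → m < k → (r m, w m, r (m + 1)) ∉ B.acc j := by
      intro m hm hmk hmem
      exact Nat.find_min hex hmk ⟨hm, hmem⟩
    -- j ∉ v m for k₀ ≤ m ≤ k
    have hnot : ∀ m, k₀ ≤ m → m ≤ k → j ∉ v m := by
      intro m
      induction m with
      | zero => intro _ _; rw [hv0]; simp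
      | succ m ih =>
        intro h1 h2
        rcases Nat.lt_or_ge k₀ (m + 1) with hlt | hge
        · have hk₀m : k₀ ≤ m := Nat.lt_succ_iff.mp hlt
          have hmk : m < k := Nat.lt_of_succ_le h2
          have hjm : j ∉ v m := ih hk₀m (le_of_lt hmk)
          have hjvis : j ∉ visitf B (r m, w m, r (m + 1)) :=
            hmin m hk₀m hmk
          intro hmem
          have := reset_subset _ ((hvs m) ▸ hmem)
          rcases this with h | h
          · exact hjm h
          · exact hjvis h
        · have : k₀ = m + 1 := le_antisymm h1 hge
          rw [← this, hk₀]; simp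
    refine ⟨k, le_trans hk₀N hkk₀, ⟨htr k, hvs k⟩, hkacc, hnot k hkk₀ le_rfl⟩
end

section
/- In the augmented automaton B̄ of a tGBA B with n accepting sets, along any infinite run of B̄ starting from (x_init, 0), if for every j ∈ {1,…,n} infinitely many transitions ((x,v),σ,(x',v')) occur with (x,σ,x') ∈ F_j, then the memory vector equals the all-zeros vector 0 at infinitely many positions of the run. -/
/-- along any infinite run of the augmented automaton starting from
`(x_init, 0)`, if for every `j` infinitely many transitions project to transitions
in `F j`, then the memory vector equals `0` (i.e. `∅`) at infinitely many positions. -/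
theorem memory_reset_infinitely_often {X A : Type} {n : ℕ} (B : TGBA X A n)
    (w : ℕ → A) (r : ℕ → X × Set (Fin n))
    (hinit : r 0 = B.aug.init)
    (hrun : ∀ k, (r k, w k, r (k + 1)) ∈ B.aug.trans)
    (hacc : ∀ j : Fin n, ∀ N : ℕ, ∃ k ≥ N, ((r k).1, w k, (r (k + 1)).1) ∈ B.acc j) :
    ∀ N : ℕ, ∃ k ≥ N, (r k).2 = ∅ := by
  intro N
  by_contra hcon
  push_neg at hcon
  have step : ∀ k, N ≤ k →
      (r (k+1)).2 = (r k).2 ∪ visitf B ((r k).1, w k, (r (k+1)).1) := by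
    intro k hk
    have ht := (hrun k).2
    rw [reset] at ht
    split_ifs at ht with hu
    · exact absurd ht (Set.nonempty_iff_ne_empty.mp (hcon (k+1) (by omega)))
    · exact ht
  have mono : ∀ k m, N ≤ k → k ≤ m → (r k).2 ⊆ (r m).2 := by
    intro k m hk hkm
    induction m, hkm using Nat.le_induction with
    | base => exact subset_rfl
    | succ m hm ih =>
      refine ih.trans ?_
      rw [step m (hk.trans hm)]
      exact Set.subset_union_left
  have hmem : ∀ j : Fin n, ∃ k, N ≤ k ∧ j ∈ (r (k+1)).2 := by
    intro j
    obtain ⟨k, hk, hj⟩ := hacc j N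
    exact ⟨k, hk, by rw [step k hk]; exact Or.inr hj⟩
  choose f hf1 hf2 using hmem
  set M := max N (Finset.univ.sup fun j => f j + 1) with hM
  have hMN : N ≤ M := le_max_left _ _
  have huniv : (r M).2 = Set.univ := by
    ext j
    simp only [Set.mem_univ, iff_true]
    have h1 : f j + 1 ≤ M :=
      le_trans (Finset.le_sup (f := fun j => f j + 1) (Finset.mem_univ j)) (le_max_right _ _)
    exact mono (f j + 1) M (by have := hf1 j; omega) h1 (hf2 j)
  have ht := (hrun M).2
  have hu : (r M).2 ∪ visitf B ((r M).1, w M, (r (M+1)).1) = Set.univ := by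
    rw [huniv]; simp
  rw [hu, reset, if_pos rfl] at ht
  exact Set.nonempty_iff_ne_empty.mp (hcon (M+1) (by omega)) ht
end

section
/- Let v_0 = 0 ∈ {0,1}^n and v_{k+1} = reset(Max(v_k, u_k)) for a sequence u_0, u_1, … ∈ {0,1}^n, where reset maps the all-ones vector to 0 and is otherwise the identity, and Max is componentwise maximum. If for every j ∈ {1,…,n} there are infinitely many k with (u_k)_j = 1, then for every j there are infinitely many k with (u_k)_j = 1 and (v_k)_j = 0. -/
/-- if `v 0 = 0` and `v (k+1) = reset (Max (v k, u k))`, and every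
component `j` is set in `u k` for infinitely many `k`, then for every `j` there
are infinitely many `k` with `(u k)_j = 1` and `(v k)_j = 0`. -/
theorem infinitely_often_visit_with_zero_memory {n : ℕ}
    (u v : ℕ → Set (Fin n)) (h0 : v 0 = ∅)
    (hstep : ∀ k, v (k + 1) = reset (v k ∪ u k))
    (hinf : ∀ j : Fin n, ∀ N : ℕ, ∃ k ≥ N, j ∈ u k) :
    ∀ j : Fin n, ∀ N : ℕ, ∃ k ≥ N, j ∈ u k ∧ j ∉ v k := by
  classical
  intro j N
  -- Step 1: find m ≥ N with j ∉ v m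
  have key : ∀ M, ∃ m ≥ M, j ∉ v m := by
    intro M
    by_contra h
    push_neg at h
    have hne : ∀ m ≥ M, v (m + 1) = v m ∪ u m ∧ v m ∪ u m ≠ Set.univ := by
      intro m hm
      by_cases hu : v m ∪ u m = Set.univ
      · have hv : v (m + 1) = ∅ := by rw [hstep m, reset, if_pos hu]
        exact absurd (h (m + 1) (by omega)) (by simp [hv])
      · exact ⟨by rw [hstep m, reset, if_neg hu], hu⟩
    have mono : ∀ a b : ℕ, M ≤ a → a ≤ b → v a ⊆ v b := by
      intro a b ha hab
      induction b, hab using Nat.le_induction with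
      | base => exact subset_rfl
      | succ b hb ih =>
        have := (hne b (by omega)).1
        rw [this]
        exact ih.trans Set.subset_union_left
    choose f hf1 hf2 using fun i : Fin n => hinf i M
    set K := (Finset.univ.sup f) + 1 with hK
    have hKM : M ≤ K := by
      have := hf1 j
      have := Finset.le_sup (f := f) (Finset.mem_univ j)
      omega
    have hKuniv : v K = Set.univ := by
      ext i
      simp only [Set.mem_univ, iff_true]
      have h1 : i ∈ v (f i + 1) := by
        rw [(hne (f i) (hf1 i)).1]
        exact Set.mem_union_right _ (hf2 i)
      have h2 : f i + 1 ≤ K := by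
        have := Finset.le_sup (f := f) (Finset.mem_univ i)
        omega
      exact mono (f i + 1) K (by have := hf1 i; omega) h2 h1
    have := (hne K hKM).2
    apply this
    rw [hKuniv]
    simp
  obtain ⟨m, hm, hjm⟩ := key N
  have hex : ∃ k, m ≤ k ∧ j ∈ u k := by
    obtain ⟨k, hk, hjk⟩ := hinf j m
    exact ⟨k, hk, hjk⟩
  set k := Nat.find hex with hkdef
  obtain ⟨hmk, hjk⟩ := Nat.find_spec hex
  refine ⟨k, by omega, hjk, ?_⟩
  have : ∀ i, m ≤ i → i ≤ k → j ∉ v i := by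
    intro i hmi
    induction i, hmi using Nat.le_induction with
    | base => exact fun _ => hjm
    | succ i hi ih =>
      intro hik
      have hvi : j ∉ v i := ih (by omega)
      have hui : j ∉ u i := by
        have := Nat.find_min hex (show i < k by omega)
        push_neg at this
        exact this hi
      rw [hstep i, reset]
      split_ifs with hu
      · simp
      · simp [hvi, hui]
  exact this k hmk le_rfl
end

section
/- Let M⊗ be the product of a finite MDP and the augmented tLDGBA of an LTL formula φ, with reward r_p > 0 exactly on accepting transitions. If some positional policy positively satisfies φ (its induced chain has a recurrent class reachable from s_init intersecting every accepting set F̄⊗_j), then there exists γ* < 1 such that for every γ ∈ (γ*, 1), any positional policy maximizing the γ-discounted expected reward from s_init also positively satisfies φ. Equivalently: for γ > γ*, no policy whose recurrent classes all avoid the accepting sets can be optimal. -/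
-- A finite Markov chain is a finite state set `S` with a stochastic kernel `P`.
def IsKernel {S : Type} [Fintype S] (P : S → S → ℝ) : Prop :=
  (∀ s s', 0 ≤ P s s') ∧ ∀ s, ∑ s', P s s' = 1

-- `pstep P k s s'` is the `k`-step transition probability from `s` to `s'`.
def pstep {S : Type} [Fintype S] [DecidableEq S] (P : S → S → ℝ) : ℕ → S → S → ℝ
  | 0 => fun s s' => if s = s' then 1 else 0
  | k + 1 => fun s s' => ∑ t, pstep P k s t * P t s'

-- `taboo P s k s'` is the probability, starting from `s`, of being at `s'`
-- after `k` steps without having visited `s` at any of the steps `1,…,k-1`.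
-- In particular `taboo P s k s` (for `k ≥ 1`) is the probability that the
-- first return to `s` occurs exactly at step `k`.
def taboo {S : Type} [Fintype S] [DecidableEq S] (P : S → S → ℝ) (s : S) : ℕ → S → ℝ
  | 0 => fun s' => if s' = s then 1 else 0
  | k + 1 => fun s' => ∑ x, (if x = s ∧ k ≠ 0 then 0 else taboo P s k x) * P x s'

-- The probability of ever returning to `s` starting from `s`.
noncomputable def returnProb {S : Type} [Fintype S] [DecidableEq S]
    (P : S → S → ℝ) (s : S) : ℝ :=
  ∑' k : ℕ, taboo P s (k + 1) s

-- A state is recurrent if the first-return probability equals 1,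
-- and transient if it is strictly less than 1.
def IsRecurrent {S : Type} [Fintype S] [DecidableEq S] (P : S → S → ℝ) (s : S) : Prop :=
  returnProb P s = 1

def IsTransient {S : Type} [Fintype S] [DecidableEq S] (P : S → S → ℝ) (s : S) : Prop :=
  returnProb P s < 1

-- A (product) MDP is given by transition probabilities `P s a s'`; a positional
-- policy `π : S → A` induces the Markov chain with kernel `mdpKer P π`.
def mdpKer {S A : Type} (P : S → A → S → ℝ) (π : S → A) : S → S → ℝ :=
  fun s s' => P s (π s) s'

open Classical in
-- The γ-discounted expected total reward from `s₀` under the positional policy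
-- `π`, where the reward of a transition `(s, a, s')` is `r_p` if it belongs to
-- some accepting set `Acc j` and `0` otherwise.
noncomputable def mdpVal {S A : Type} [Fintype S] [DecidableEq S]
    (P : S → A → S → ℝ) (π : S → A) {n : ℕ} (Acc : Fin n → Set (S × A × S))
    (r_p γ : ℝ) (s₀ : S) : ℝ :=
  ∑' k : ℕ, γ ^ k * ∑ s, ∑ s', pstep (mdpKer P π) k s₀ s * mdpKer P π s s' *
    (if ∃ j, (s, π s, s') ∈ Acc j then r_p else 0)

-- A positional policy `π` "positively satisfies φ": the chain it induces has a
-- recurrent class reachable from `s_init` that intersects every accepting set.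
def PositivelySatisfies {S A : Type} [Fintype S] [DecidableEq S]
    (P : S → A → S → ℝ) {n : ℕ} (Acc : Fin n → Set (S × A × S))
    (s_init : S) (π : S → A) : Prop :=
  ∃ shat : S, (∃ k : ℕ, 0 < pstep (mdpKer P π) k s_init shat) ∧
    IsRecurrent (mdpKer P π) shat ∧
    ∀ j : Fin n, ∃ s s', (∃ k : ℕ, 0 < pstep (mdpKer P π) k shat s) ∧
      0 < mdpKer P π s s' ∧ (s, π s, s') ∈ Acc j

/-!
Let `G_γ(z, s) = ∑ₖ γᵏ pᵏ(z, s)` be the discounted occupation of `s` from `z` (`greenFun`); the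
value of a positional policy is `∑ₛ R(s) G_γ(s_init, s)`, where `R(s)` is the expected one-step
reward at `s`. The renewal equation `G_γ(z, s) = δ(z, s) + F_γ(z, s) G_γ(s, s)`, with `F_γ` the
generating function of the first passage time to `s`, gives `G_γ(s, s) = (1 - F_γ(s, s))⁻¹`. At a
transient state `F_γ(s, s)` stays below the return probability, which is `< 1`, so `G_γ(·, s)` is
bounded uniformly in `γ`; at a recurrent state `F_γ(s, s) → 1` as `γ → 1⁻` by Abel's theorem, so
`G_γ(s, s) → ∞`.

By Lemma 1, a policy that does not positively satisfy φ collects reward only at transient states,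
so its value is bounded uniformly in `γ`, and, there being finitely many policies, uniformly in the
policy. The value of a policy that positively satisfies φ diverges as `γ → 1⁻`, so for `γ` close to
`1` it exceeds that bound and no optimal policy can fail to positively satisfy φ.
-/

open Filter Topology Finset

-- `taboo P s` started at `z` rather than at the taboo state `s`.
def tabooFrom {S : Type} [Fintype S] [DecidableEq S] (P : S → S → ℝ) (s z : S) : ℕ → S → ℝ
  | 0 => fun s' => if s' = z then 1 else 0
  | k + 1 => fun s' => ∑ x, (if x = s ∧ k ≠ 0 then 0 else tabooFrom P s z k x) * P x s'

noncomputable def greenFun {S : Type} [Fintype S] [DecidableEq S] (P : S → S → ℝ) (γ : ℝ)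
    (z s : S) : ℝ :=
  ∑' k : ℕ, γ ^ k * pstep P k z s

noncomputable def firstPassageGen {S : Type} [Fintype S] [DecidableEq S] (P : S → S → ℝ)
    (γ : ℝ) (z s : S) : ℝ :=
  ∑' m : ℕ, γ ^ (m + 1) * tabooFrom P s z (m + 1) s

section MarkovChain

variable {S : Type} [Fintype S] [DecidableEq S] {P : S → S → ℝ}

lemma pstep_nonneg (hP : IsKernel P) (k : ℕ) (z s : S) : 0 ≤ pstep P k z s := by
  induction k generalizing s with
  | zero => simp only [pstep]; split <;> norm_num
  | succ k ih => exact sum_nonneg fun t _ => mul_nonneg (ih t) (hP.1 t s)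

lemma sum_pstep (hP : IsKernel P) (k : ℕ) (z : S) : ∑ s, pstep P k z s = 1 := by
  induction k with
  | zero => simp [pstep]
  | succ k ih =>
    simp only [pstep]
    rw [sum_comm]
    simp_rw [← mul_sum, hP.2, mul_one, ih]

lemma pstep_le_one (hP : IsKernel P) (k : ℕ) (z s : S) : pstep P k z s ≤ 1 :=
  (single_le_sum (fun t _ => pstep_nonneg hP k z t) (mem_univ s)).trans_eq (sum_pstep hP k z)

lemma pstep_add (a b : ℕ) (z s : S) :
    pstep P (a + b) z s = ∑ t, pstep P a z t * pstep P b t s := by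
  induction b generalizing s with
  | zero => simp [pstep]
  | succ b ih =>
    show pstep P (a + b + 1) z s = _
    simp only [pstep, ih, sum_mul, mul_sum, mul_assoc]
    exact sum_comm

lemma pstep_mul_pstep_le (hP : IsKernel P) (a b : ℕ) (z t s : S) :
    pstep P a z t * pstep P b t s ≤ pstep P (a + b) z s := by
  rw [pstep_add]
  exact single_le_sum (fun u _ => mul_nonneg (pstep_nonneg hP a z u) (pstep_nonneg hP b u s))
    (mem_univ t)

lemma taboo_eq_tabooFrom (s : S) : ∀ k, taboo P s k = tabooFrom P s s k
  | 0 => rfl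
  | k + 1 => by
    ext s'
    simp only [taboo, tabooFrom, taboo_eq_tabooFrom s k]

lemma tabooFrom_nonneg (hP : IsKernel P) (s z : S) (k : ℕ) (s' : S) :
    0 ≤ tabooFrom P s z k s' := by
  induction k generalizing s' with
  | zero => simp only [tabooFrom]; split <;> norm_num
  | succ k ih =>
    refine sum_nonneg fun x _ => mul_nonneg ?_ (hP.1 x s')
    split
    · exact le_rfl
    · exact ih x

lemma tabooFrom_one (s z s' : S) : tabooFrom P s z 1 s' = P z s' := by
  simp [tabooFrom]

private lemma sum_ite_eq_zero_add (f : S → ℝ) (s : S) :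
    (∑ x, if x = s then 0 else f x) + f s = ∑ x, f x := by
  rw [← sum_erase_add _ _ (mem_univ s), sum_ite_of_false (by simp)]
  simp

/-- Conservation of mass: after `K + 1` steps the chain has either not yet visited `s`, or has
visited it for the first time at one of the steps `1, …, K + 1`. -/
lemma sum_tabooFrom_add_sum_range_eq_one (hP : IsKernel P) (s z : S) : ∀ K : ℕ,
    (∑ x, if x = s then 0 else tabooFrom P s z (K + 1) x) +
      ∑ m ∈ range (K + 1), tabooFrom P s z (m + 1) s = 1
  | 0 => by
    rw [sum_range_one, sum_ite_eq_zero_add]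
    simp_rw [zero_add, tabooFrom_one]
    exact hP.2 z
  | K + 1 => by
    have hnext : ∑ x, tabooFrom P s z (K + 2) x =
        ∑ x, if x = s then 0 else tabooFrom P s z (K + 1) x := by
      simp only [tabooFrom, ne_eq, Nat.succ_ne_zero, not_false_eq_true, and_true]
      rw [sum_comm]
      simp_rw [← mul_sum, hP.2, mul_one]
    rw [sum_range_succ, ← sum_tabooFrom_add_sum_range_eq_one hP s z K, ← hnext,
      ← sum_ite_eq_zero_add (tabooFrom P s z (K + 2)) s]
    ring

lemma sum_range_tabooFrom_le_one (hP : IsKernel P) (s z : S) (K : ℕ) :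
    ∑ m ∈ range K, tabooFrom P s z (m + 1) s ≤ 1 := by
  rcases K with _ | K
  · simp
  · rw [← sum_tabooFrom_add_sum_range_eq_one hP s z K, le_add_iff_nonneg_left]
    refine sum_nonneg fun x _ => ?_
    split
    · exact le_rfl
    · exact tabooFrom_nonneg hP s z _ x

lemma summable_tabooFrom (hP : IsKernel P) (s z : S) :
    Summable fun m : ℕ => tabooFrom P s z (m + 1) s :=
  summable_of_sum_range_le (fun m => tabooFrom_nonneg hP s z (m + 1) s)
    (sum_range_tabooFrom_le_one hP s z)

lemma returnProb_eq_tsum_tabooFrom (s : S) :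
    returnProb P s = ∑' m : ℕ, tabooFrom P s s (m + 1) s := by
  simp only [returnProb, taboo_eq_tabooFrom]

lemma tsum_tabooFrom_le_one (hP : IsKernel P) (s z : S) :
    ∑' m : ℕ, tabooFrom P s z (m + 1) s ≤ 1 :=
  Real.tsum_le_of_sum_range_le (fun m => tabooFrom_nonneg hP s z (m + 1) s)
    (sum_range_tabooFrom_le_one hP s z)

lemma returnProb_nonneg (hP : IsKernel P) (s : S) : 0 ≤ returnProb P s := by
  rw [returnProb_eq_tsum_tabooFrom]
  exact tsum_nonneg fun m => tabooFrom_nonneg hP s s (m + 1) s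

lemma returnProb_le_one (hP : IsKernel P) (s : S) : returnProb P s ≤ 1 := by
  rw [returnProb_eq_tsum_tabooFrom]
  exact tsum_tabooFrom_le_one hP s s

lemma isTransient_of_not_isRecurrent (hP : IsKernel P) {s : S} (h : ¬IsRecurrent P s) :
    IsTransient P s :=
  lt_of_le_of_ne (returnProb_le_one hP s) h

/-- First-passage decomposition of the `(K + 1)`-step transition probabilities according to the
time of the first visit to `s`. -/
lemma pstep_succ_eq_tabooFrom_add_sum (hP : IsKernel P) (s z : S) : ∀ (K : ℕ) (s' : S),
    pstep P (K + 1) z s' = (if s' = s then 0 else tabooFrom P s z (K + 1) s') +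
      ∑ m ∈ range (K + 1), tabooFrom P s z (m + 1) s * pstep P (K - m) s s'
  | 0, s' => by
    by_cases h : s' = s
    · subst h
      simp [pstep, tabooFrom]
    · simp [pstep, tabooFrom, h, Ne.symm h]
  | K + 1, s' => by
    have hfirst : ∑ t, (if t = s then 0 else tabooFrom P s z (K + 1) t) * P t s' =
        tabooFrom P s z (K + 2) s' := by
      simp only [tabooFrom, ne_eq, Nat.succ_ne_zero, not_false_eq_true, and_true]
    have hrest : ∑ t, ∑ m ∈ range (K + 1),
          tabooFrom P s z (m + 1) s * pstep P (K - m) s t * P t s' =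
        ∑ m ∈ range (K + 1), tabooFrom P s z (m + 1) s * pstep P (K + 1 - m) s s' := by
      rw [sum_comm]
      refine sum_congr rfl fun m hm => ?_
      rw [Nat.sub_add_comm (Nat.lt_succ_iff.mp (mem_range.mp hm)), pstep, mul_sum]
      simp only [mul_assoc]
    have hlast : tabooFrom P s z (K + 2) s' =
        (if s' = s then 0 else tabooFrom P s z (K + 2) s') +
          tabooFrom P s z (K + 2) s * pstep P (K + 1 - (K + 1)) s s' := by
      by_cases h : s' = s
      · subst h
        simp [pstep]
      · simp [pstep, h, Ne.symm h]
    calc pstep P (K + 2) z s' = ∑ t, pstep P (K + 1) z t * P t s' := rfl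
      _ = tabooFrom P s z (K + 2) s' +
          ∑ m ∈ range (K + 1), tabooFrom P s z (m + 1) s * pstep P (K + 1 - m) s s' := by
        simp_rw [pstep_succ_eq_tabooFrom_add_sum hP s z K, add_mul, sum_add_distrib, sum_mul,
          hfirst, hrest]
      _ = _ := by
        conv_lhs => rw [hlast]
        rw [sum_range_succ _ (K + 1)]
        ring

end MarkovChain

section GreenFunction

variable {S : Type} [Fintype S] [DecidableEq S] {P : S → S → ℝ} {γ : ℝ}

lemma summable_greenFun (hP : IsKernel P) (hγ0 : 0 ≤ γ) (hγ1 : γ < 1) (z s : S) :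
    Summable fun k : ℕ => γ ^ k * pstep P k z s :=
  (summable_geometric_of_lt_one hγ0 hγ1).of_nonneg_of_le
    (fun k => mul_nonneg (pow_nonneg hγ0 k) (pstep_nonneg hP k z s))
    (fun k => mul_le_of_le_one_right (pow_nonneg hγ0 k) (pstep_le_one hP k z s))

lemma greenFun_nonneg (hP : IsKernel P) (hγ0 : 0 ≤ γ) (z s : S) : 0 ≤ greenFun P γ z s :=
  tsum_nonneg fun k => mul_nonneg (pow_nonneg hγ0 k) (pstep_nonneg hP k z s)

lemma sum_greenFun (hP : IsKernel P) (hγ0 : 0 ≤ γ) (hγ1 : γ < 1) (z : S) :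
    ∑ s, greenFun P γ z s = (1 - γ)⁻¹ := by
  unfold greenFun
  rw [← Summable.tsum_finsetSum fun s _ => summable_greenFun hP hγ0 hγ1 z s,
    ← tsum_geometric_of_lt_one hγ0 hγ1]
  simp_rw [← mul_sum, sum_pstep hP, mul_one]

lemma greenFun_eq_zero_of_not_reachable (h : ∀ k, pstep P k z s = 0) : greenFun P γ z s = 0 := by
  simp [greenFun, h]

lemma pow_mul_pstep_mul_greenFun_le (hP : IsKernel P) (hγ0 : 0 ≤ γ) (hγ1 : γ < 1) (a : ℕ)
    (z t s : S) : γ ^ a * pstep P a z t * greenFun P γ t s ≤ greenFun P γ z s := by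
  unfold greenFun
  rw [← tsum_mul_left]
  refine Summable.tsum_le_tsum_of_inj (a + ·) (add_right_injective a)
    (fun k _ => mul_nonneg (pow_nonneg hγ0 k) (pstep_nonneg hP k z s)) (fun k => ?_)
    ((summable_greenFun hP hγ0 hγ1 t s).mul_left _) (summable_greenFun hP hγ0 hγ1 z s)
  calc γ ^ a * pstep P a z t * (γ ^ k * pstep P k t s)
      = γ ^ (a + k) * (pstep P a z t * pstep P k t s) := by ring
    _ ≤ γ ^ (a + k) * pstep P (a + k) z s :=
      mul_le_mul_of_nonneg_left (pstep_mul_pstep_le hP a k z t s) (pow_nonneg hγ0 _)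

lemma greenFun_mul_pow_mul_pstep_le (hP : IsKernel P) (hγ0 : 0 ≤ γ) (hγ1 : γ < 1) (b : ℕ)
    (z t s : S) : greenFun P γ z t * (γ ^ b * pstep P b t s) ≤ greenFun P γ z s := by
  unfold greenFun
  rw [← tsum_mul_right]
  refine Summable.tsum_le_tsum_of_inj (· + b) (add_left_injective b)
    (fun k _ => mul_nonneg (pow_nonneg hγ0 k) (pstep_nonneg hP k z s)) (fun k => ?_)
    ((summable_greenFun hP hγ0 hγ1 z t).mul_right _) (summable_greenFun hP hγ0 hγ1 z s)
  calc γ ^ k * pstep P k z t * (γ ^ b * pstep P b t s)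
      = γ ^ (k + b) * (pstep P k z t * pstep P b t s) := by ring
    _ ≤ γ ^ (k + b) * pstep P (k + b) z s :=
      mul_le_mul_of_nonneg_left (pstep_mul_pstep_le hP k b z t s) (pow_nonneg hγ0 _)

lemma summable_firstPassageGen (hP : IsKernel P) (hγ0 : 0 ≤ γ) (hγ1 : γ < 1) (z s : S) :
    Summable fun m : ℕ => γ ^ (m + 1) * tabooFrom P s z (m + 1) s :=
  (summable_tabooFrom hP s z).of_nonneg_of_le
    (fun m => mul_nonneg (pow_nonneg hγ0 _) (tabooFrom_nonneg hP s z (m + 1) s))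
    (fun m => mul_le_of_le_one_left (tabooFrom_nonneg hP s z (m + 1) s)
      (pow_le_one₀ hγ0 hγ1.le))

lemma firstPassageGen_le_mul (hP : IsKernel P) (hγ0 : 0 ≤ γ) (hγ1 : γ < 1) (z s : S) :
    firstPassageGen P γ z s ≤ γ * ∑' m : ℕ, tabooFrom P s z (m + 1) s := by
  rw [firstPassageGen, ← tsum_mul_left]
  refine Summable.tsum_le_tsum (fun m => ?_) (summable_firstPassageGen hP hγ0 hγ1 z s)
    ((summable_tabooFrom hP s z).mul_left γ)
  rw [pow_succ']
  exact mul_le_mul_of_nonneg_right (mul_le_of_le_one_right hγ0 (pow_le_one₀ hγ0 hγ1.le))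
    (tabooFrom_nonneg hP s z (m + 1) s)

lemma firstPassageGen_le_one (hP : IsKernel P) (hγ0 : 0 ≤ γ) (hγ1 : γ < 1) (z s : S) :
    firstPassageGen P γ z s ≤ 1 :=
  (firstPassageGen_le_mul hP hγ0 hγ1 z s).trans
    (mul_le_one₀ hγ1.le (tsum_nonneg fun m => tabooFrom_nonneg hP s z (m + 1) s)
      (tsum_tabooFrom_le_one hP s z))

lemma firstPassageGen_self_le_returnProb (hP : IsKernel P) (hγ0 : 0 ≤ γ) (hγ1 : γ < 1) (s : S) :
    firstPassageGen P γ s s ≤ γ * returnProb P s :=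
  (returnProb_eq_tsum_tabooFrom (P := P) s).symm ▸ firstPassageGen_le_mul hP hγ0 hγ1 s s

lemma firstPassageGen_self_lt_one (hP : IsKernel P) (hγ0 : 0 ≤ γ) (hγ1 : γ < 1) (s : S) :
    firstPassageGen P γ s s < 1 :=
  (firstPassageGen_self_le_returnProb hP hγ0 hγ1 s).trans_lt
    (mul_lt_one_of_nonneg_of_lt_one_left hγ0 hγ1 (returnProb_le_one hP s))

lemma greenFun_eq_add_firstPassageGen_mul (hP : IsKernel P) (hγ0 : 0 ≤ γ) (hγ1 : γ < 1)
    (z s : S) :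
    greenFun P γ z s = (if z = s then 1 else 0) + firstPassageGen P γ z s * greenFun P γ s s := by
  have hterm : ∀ K : ℕ, γ ^ (K + 1) * pstep P (K + 1) z s = ∑ m ∈ range (K + 1),
      (γ ^ (m + 1) * tabooFrom P s z (m + 1) s) * (γ ^ (K - m) * pstep P (K - m) s s) := by
    intro K
    rw [pstep_succ_eq_tabooFrom_add_sum hP s z K s, if_pos rfl, zero_add, mul_sum]
    refine sum_congr rfl fun m hm => ?_
    rw [← Nat.sub_add_cancel (Nat.lt_succ_iff.mp (mem_range.mp hm)), Nat.add_sub_cancel]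
    ring
  have hF := summable_firstPassageGen hP hγ0 hγ1 z s
  have hG := summable_greenFun hP hγ0 hγ1 s s
  rw [greenFun, (summable_greenFun hP hγ0 hγ1 z s).tsum_eq_zero_add, tsum_congr hterm,
    ← tsum_mul_tsum_eq_tsum_sum_range_of_summable_norm hF.norm hG.norm]
  simp [pstep, firstPassageGen, greenFun]

lemma greenFun_self_eq_inv (hP : IsKernel P) (hγ0 : 0 ≤ γ) (hγ1 : γ < 1) (s : S) :
    greenFun P γ s s = (1 - firstPassageGen P γ s s)⁻¹ := by
  have h := greenFun_eq_add_firstPassageGen_mul hP hγ0 hγ1 s s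
  rw [if_pos rfl] at h
  exact eq_inv_of_mul_eq_one_left (by linear_combination h)

lemma greenFun_le_of_isTransient (hP : IsKernel P) (hγ0 : 0 ≤ γ) (hγ1 : γ < 1) {s : S}
    (hs : IsTransient P s) (z : S) :
    greenFun P γ z s ≤ 1 + (1 - returnProb P s)⁻¹ := by
  have hself : greenFun P γ s s ≤ (1 - returnProb P s)⁻¹ := by
    rw [greenFun_self_eq_inv hP hγ0 hγ1 s]
    have hF := firstPassageGen_self_le_returnProb hP hγ0 hγ1 s
    have hρ := returnProb_nonneg hP s
    have : firstPassageGen P γ s s ≤ returnProb P s := hF.trans (mul_le_of_le_one_left hρ hγ1.le)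
    exact inv_anti₀ (sub_pos.2 (hs : returnProb P s < 1)) (by linarith)
  rw [greenFun_eq_add_firstPassageGen_mul hP hγ0 hγ1 z s]
  gcongr
  · split <;> norm_num
  · calc firstPassageGen P γ z s * greenFun P γ s s ≤ 1 * greenFun P γ s s :=
          mul_le_mul_of_nonneg_right (firstPassageGen_le_one hP hγ0 hγ1 z s)
            (greenFun_nonneg hP hγ0 s s)
      _ ≤ (1 - returnProb P s)⁻¹ := by rwa [one_mul]

lemma exists_greenFun_le (hP : IsKernel P) {z s : S}
    (hs : (∃ k, 0 < pstep P k z s) → IsTransient P s) :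
    ∃ C, ∀ γ : ℝ, 0 ≤ γ → γ < 1 → greenFun P γ z s ≤ C := by
  by_cases hreach : ∃ k, 0 < pstep P k z s
  · exact ⟨_, fun γ hγ0 hγ1 => greenFun_le_of_isTransient hP hγ0 hγ1 (hs hreach) z⟩
  · push Not at hreach
    refine ⟨0, fun γ _ _ => (greenFun_eq_zero_of_not_reachable fun k => ?_).le⟩
    exact (hreach k).antisymm (pstep_nonneg hP k z s)

lemma tendsto_inv_one_sub_atTop {ι : Type*} {l : Filter ι} {f : ι → ℝ} (hf : Tendsto f l (𝓝 1))
    (hlt : ∀ᶠ x in l, f x < 1) : Tendsto (fun x => (1 - f x)⁻¹) l atTop := by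
  refine Tendsto.inv_tendsto_nhdsGT_zero (tendsto_nhdsWithin_iff.2 ⟨?_, ?_⟩)
  · simpa using (tendsto_const_nhds (x := (1 : ℝ))).sub hf
  · filter_upwards [hlt] with x hx using sub_pos.2 hx

lemma tendsto_greenFun_self_of_isRecurrent (hP : IsKernel P) {s : S} (hs : IsRecurrent P s) :
    Tendsto (fun γ => greenFun P γ s s) (𝓝[<] 1) atTop := by
  have hpos : ∀ᶠ γ : ℝ in 𝓝[<] 1, γ ∈ Set.Ioo 0 1 := Ioo_mem_nhdsLT one_pos
  have habel : Tendsto (fun γ => firstPassageGen P γ s s) (𝓝[<] 1) (𝓝 1) := by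
    have hsum := (summable_tabooFrom hP s s).hasSum.tendsto_sum_nat
    rw [← returnProb_eq_tsum_tabooFrom, hs] at hsum
    have h : Tendsto (fun γ : ℝ => γ * ∑' m, tabooFrom P s s (m + 1) s * γ ^ m) (𝓝[<] 1)
        (𝓝 (1 * 1)) :=
      (tendsto_id.mono_left nhdsWithin_le_nhds).mul
        (Real.tendsto_tsum_powerSeries_nhdsWithin_lt hsum)
    rw [one_mul] at h
    refine h.congr' ?_
    filter_upwards [hpos] with γ _
    simp only [firstPassageGen, ← tsum_mul_left, pow_succ']
    exact tsum_congr fun m => by ring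
  have hlt : ∀ᶠ γ in 𝓝[<] 1, firstPassageGen P γ s s < 1 := by
    filter_upwards [hpos] with γ hγ using firstPassageGen_self_lt_one hP hγ.1.le hγ.2 s
  refine (tendsto_inv_one_sub_atTop habel hlt).congr' ?_
  filter_upwards [hpos] with γ hγ using (greenFun_self_eq_inv hP hγ.1.le hγ.2 s).symm

/-- Otherwise every reachable state would be transient, bounding the total discounted occupation
`∑ s, G(z, s) = (1 - γ)⁻¹` uniformly in `γ`. -/
lemma exists_reachable_isRecurrent (hP : IsKernel P) (z : S) :
    ∃ s, (∃ k, 0 < pstep P k z s) ∧ IsRecurrent P s := by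
  by_contra! hnone
  choose C hC using fun s =>
    exists_greenFun_le hP (z := z) (s := s) fun h => isTransient_of_not_isRecurrent hP (hnone s h)
  have hdiv : Tendsto (fun γ : ℝ => (1 - γ)⁻¹) (𝓝[<] 1) atTop :=
    tendsto_inv_one_sub_atTop (tendsto_id.mono_left nhdsWithin_le_nhds) self_mem_nhdsWithin
  obtain ⟨γ, hγC, hγ⟩ :=
    ((hdiv.eventually_gt_atTop (∑ s, C s)).and (Ioo_mem_nhdsLT one_pos)).exists
  rw [← sum_greenFun hP hγ.1.le hγ.2 z] at hγC
  exact hγC.not_ge (sum_le_sum fun s _ => hC s γ hγ.1.le hγ.2)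

end GreenFunction

open Classical in
noncomputable def expectedReward {S A : Type} [Fintype S] (P : S → A → S → ℝ) (π : S → A)
    {n : ℕ} (Acc : Fin n → Set (S × A × S)) (r_p : ℝ) (s : S) : ℝ :=
  ∑ s', mdpKer P π s s' * (if ∃ j, (s, π s, s') ∈ Acc j then r_p else 0)

/-- The conclusion of Lemma 1 for the chain induced by `π`: the states reachable from a recurrent
state (its recurrent class) meet either every accepting set or none. -/
def RecurrentClassesMeetAllOrNone {S A : Type} [Fintype S] [DecidableEq S]
    (P : S → A → S → ℝ) {n : ℕ} (Acc : Fin n → Set (S × A × S)) (π : S → A) : Prop :=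
  ∀ s : S, IsRecurrent (mdpKer P π) s →
    (∀ j : Fin n, ∃ s₁ s₂, (∃ k : ℕ, 0 < pstep (mdpKer P π) k s s₁) ∧
      0 < mdpKer P π s₁ s₂ ∧ (s₁, π s₁, s₂) ∈ Acc j) ∨
    (∀ j : Fin n, ∀ s₁ s₂, (∃ k : ℕ, 0 < pstep (mdpKer P π) k s s₁) →
      0 < mdpKer P π s₁ s₂ → (s₁, π s₁, s₂) ∉ Acc j)

open Classical in
lemma reward_nonneg {S A : Type} {π : S → A} {n : ℕ} {Acc : Fin n → Set (S × A × S)} {r_p : ℝ}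
    (hr : 0 ≤ r_p) (s s' : S) : 0 ≤ if ∃ j, (s, π s, s') ∈ Acc j then r_p else 0 := by
  split
  · exact hr
  · exact le_rfl

section Reward

variable {S A : Type} [Fintype S] {P : S → A → S → ℝ} {π : S → A} {n : ℕ}
  {Acc : Fin n → Set (S × A × S)} {r_p : ℝ}

lemma isKernel_mdpKer (hP0 : ∀ s a s', 0 ≤ P s a s') (hP1 : ∀ s a, ∑ s', P s a s' = 1)
    (π : S → A) : IsKernel (mdpKer P π) :=
  ⟨fun s s' => hP0 s (π s) s', fun s => hP1 s (π s)⟩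

lemma expectedReward_nonneg (hK : IsKernel (mdpKer P π)) (hr : 0 ≤ r_p) (s : S) :
    0 ≤ expectedReward P π Acc r_p s :=
  sum_nonneg fun s' _ => mul_nonneg (hK.1 s s') (reward_nonneg hr s s')

lemma expectedReward_le (hK : IsKernel (mdpKer P π)) (hr : 0 ≤ r_p) (s : S) :
    expectedReward P π Acc r_p s ≤ r_p := by
  calc expectedReward P π Acc r_p s ≤ ∑ s', mdpKer P π s s' * r_p := by
        refine sum_le_sum fun s' _ => mul_le_mul_of_nonneg_left ?_ (hK.1 s s')
        split
        · exact le_rfl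
        · exact hr
    _ = r_p := by rw [← sum_mul, hK.2 s, one_mul]

lemma mdpKer_mul_le_expectedReward (hK : IsKernel (mdpKer P π)) (hr : 0 ≤ r_p) {s s' : S}
    {j : Fin n} (hacc : (s, π s, s') ∈ Acc j) :
    mdpKer P π s s' * r_p ≤ expectedReward P π Acc r_p s := by
  classical
  refine le_of_eq_of_le ?_ (single_le_sum (fun t _ => mul_nonneg (hK.1 s t)
    (reward_nonneg (Acc := Acc) hr s t)) (mem_univ s'))
  rw [if_pos ⟨j, hacc⟩]

lemma expectedReward_eq_zero (hK : IsKernel (mdpKer P π)) {s : S}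
    (hs : ∀ s', 0 < mdpKer P π s s' → ∀ j, (s, π s, s') ∉ Acc j) :
    expectedReward P π Acc r_p s = 0 := by
  refine sum_eq_zero fun s' _ => ?_
  rcases (hK.1 s s').eq_or_lt with hQ | hQ
  · rw [← hQ, zero_mul]
  · rw [if_neg fun ⟨j, hj⟩ => hs s' hQ j hj, mul_zero]

end Reward

section MDP

variable {S A : Type} [Fintype S] [DecidableEq S] {P : S → A → S → ℝ} {π : S → A} {n : ℕ}
  {Acc : Fin n → Set (S × A × S)} {r_p γ : ℝ} {s₀ : S}

lemma mdpVal_eq_sum_expectedReward_mul_greenFun (hK : IsKernel (mdpKer P π)) (hγ0 : 0 ≤ γ)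
    (hγ1 : γ < 1) :
    mdpVal P π Acc r_p γ s₀ =
      ∑ s, expectedReward P π Acc r_p s * greenFun (mdpKer P π) γ s₀ s := by
  unfold greenFun
  simp_rw [← tsum_mul_left]
  rw [← Summable.tsum_finsetSum fun s _ => (summable_greenFun hK hγ0 hγ1 s₀ s).mul_left _]
  refine tsum_congr fun k => ?_
  rw [mul_sum]
  refine sum_congr rfl fun s _ => ?_
  rw [expectedReward, mul_sum, sum_mul]
  exact sum_congr rfl fun s' _ => by ring


lemma isTransient_of_not_positivelySatisfies (hK : IsKernel (mdpKer P π))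
    (hπ : RecurrentClassesMeetAllOrNone P Acc π) (hsat : ¬PositivelySatisfies P Acc s₀ π)
    {s s' : S} {j : Fin n} (hreach : ∃ k, 0 < pstep (mdpKer P π) k s₀ s)
    (hQ : 0 < mdpKer P π s s') (hacc : (s, π s, s') ∈ Acc j) :
    IsTransient (mdpKer P π) s := by
  refine isTransient_of_not_isRecurrent hK fun hrec => ?_
  rcases hπ s hrec with hall | hnone
  · exact hsat ⟨s, hreach, hrec, hall⟩
  · exact hnone j s s' ⟨0, by simp [pstep]⟩ hQ hacc

lemma exists_mdpVal_le_of_not_positivelySatisfies (hK : IsKernel (mdpKer P π)) (hr : 0 ≤ r_p)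
    (hπ : RecurrentClassesMeetAllOrNone P Acc π) (hsat : ¬PositivelySatisfies P Acc s₀ π) :
    ∃ C, ∀ γ : ℝ, 0 ≤ γ → γ < 1 → mdpVal P π Acc r_p γ s₀ ≤ C := by
  have hstate : ∀ s, ∃ C, ∀ γ : ℝ, 0 ≤ γ → γ < 1 →
      expectedReward P π Acc r_p s * greenFun (mdpKer P π) γ s₀ s ≤ C := by
    intro s
    by_cases hacc : ∃ s', 0 < mdpKer P π s s' ∧ ∃ j, (s, π s, s') ∈ Acc j
    · obtain ⟨s', hQ, j, hj⟩ := hacc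
      obtain ⟨C, hC⟩ := exists_greenFun_le hK fun hreach =>
        isTransient_of_not_positivelySatisfies hK hπ hsat hreach hQ hj
      exact ⟨r_p * C, fun γ hγ0 hγ1 => mul_le_mul (expectedReward_le hK hr s) (hC γ hγ0 hγ1)
        (greenFun_nonneg hK hγ0 s₀ s) hr⟩
    · push Not at hacc
      refine ⟨0, fun γ _ _ => ?_⟩
      rw [expectedReward_eq_zero hK fun s' hQ j hj => hacc s' hQ j hj, zero_mul]
  choose C hC using hstate
  refine ⟨∑ s, C s, fun γ hγ0 hγ1 => ?_⟩
  rw [mdpVal_eq_sum_expectedReward_mul_greenFun hK hγ0 hγ1]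
  exact sum_le_sum fun s _ => hC s γ hγ0 hγ1

lemma exists_forall_mdpVal_le_of_not_positivelySatisfies [Fintype A]
    (hK : ∀ π : S → A, IsKernel (mdpKer P π)) (hr : 0 ≤ r_p)
    (hπ : ∀ π, RecurrentClassesMeetAllOrNone P Acc π) :
    ∃ B, ∀ π, ¬PositivelySatisfies P Acc s₀ π →
      ∀ γ : ℝ, 0 ≤ γ → γ < 1 → mdpVal P π Acc r_p γ s₀ ≤ B := by
  have hpolicy : ∀ π, ∃ C, ¬PositivelySatisfies P Acc s₀ π →
      ∀ γ : ℝ, 0 ≤ γ → γ < 1 → mdpVal P π Acc r_p γ s₀ ≤ C := fun π => by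
    by_cases hsat : PositivelySatisfies P Acc s₀ π
    · exact ⟨0, fun h => absurd hsat h⟩
    · obtain ⟨C, hC⟩ := exists_mdpVal_le_of_not_positivelySatisfies (hK π) hr (hπ π) hsat
      exact ⟨C, fun _ => hC⟩
  choose C hC using hpolicy
  obtain ⟨B, hB⟩ := (Set.finite_range C).bddAbove
  exact ⟨B, fun π hsat γ hγ0 hγ1 => (hC π hsat γ hγ0 hγ1).trans (hB ⟨π, rfl⟩)⟩

/-- Along `s₀ → ŝ → s₁ → s₂` with `ŝ` recurrent and `(s₁, π s₁, s₂)` accepting, the value is at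
least a positive multiple of `G(ŝ, ŝ)`, which diverges. -/
lemma tendsto_mdpVal_atTop [Nonempty (Fin n)] (hK : IsKernel (mdpKer P π)) (hr : 0 < r_p)
    (hsat : PositivelySatisfies P Acc s₀ π) :
    Tendsto (fun γ => mdpVal P π Acc r_p γ s₀) (𝓝[<] 1) atTop := by
  obtain ⟨shat, ⟨k₀, hk₀⟩, hrec, hacc⟩ := hsat
  obtain ⟨s₁, s₂, ⟨k₁, hk₁⟩, hQ, hj⟩ := hacc (Classical.arbitrary _)
  set Q := mdpKer P π
  set c : ℝ → ℝ := fun γ =>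
    Q s₁ s₂ * r_p * (γ ^ k₀ * pstep Q k₀ s₀ shat) * (γ ^ k₁ * pstep Q k₁ shat s₁)
  have hc : Tendsto c (𝓝[<] 1) (𝓝 (c 1)) :=
    ((by fun_prop : Continuous c).tendsto 1).mono_left nhdsWithin_le_nhds
  have hc1 : 0 < c 1 := by simp only [c, one_pow, one_mul]; positivity
  refine tendsto_atTop_mono' _ ?_
    (hc.pos_mul_atTop hc1 (tendsto_greenFun_self_of_isRecurrent hK hrec))
  filter_upwards [Ioo_mem_nhdsLT one_pos] with γ ⟨hγpos, hγ1⟩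
  have hγ0 := hγpos.le
  calc c γ * greenFun Q γ shat shat
      = Q s₁ s₂ * r_p * (γ ^ k₀ * pstep Q k₀ s₀ shat *
          (greenFun Q γ shat shat * (γ ^ k₁ * pstep Q k₁ shat s₁))) := by ring
    _ ≤ Q s₁ s₂ * r_p * (γ ^ k₀ * pstep Q k₀ s₀ shat * greenFun Q γ shat s₁) := by
      gcongr
      exact greenFun_mul_pow_mul_pstep_le hK hγ0 hγ1 k₁ shat shat s₁
    _ ≤ Q s₁ s₂ * r_p * greenFun Q γ s₀ s₁ := by
      gcongr
      exact pow_mul_pstep_mul_greenFun_le hK hγ0 hγ1 k₀ s₀ shat s₁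
    _ ≤ expectedReward P π Acc r_p s₁ * greenFun Q γ s₀ s₁ :=
      mul_le_mul_of_nonneg_right (mdpKer_mul_le_expectedReward hK hr.le hj)
        (greenFun_nonneg hK hγ0 s₀ s₁)
    _ ≤ ∑ s, expectedReward P π Acc r_p s * greenFun Q γ s₀ s :=
      single_le_sum (fun s _ => mul_nonneg (expectedReward_nonneg hK hr.le s)
        (greenFun_nonneg hK hγ0 s₀ s)) (mem_univ s₁)
    _ = mdpVal P π Acc r_p γ s₀ := (mdpVal_eq_sum_expectedReward_mul_greenFun hK hγ0 hγ1).symm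

lemma positivelySatisfies_of_isEmpty [IsEmpty (Fin n)] (hK : IsKernel (mdpKer P π)) :
    PositivelySatisfies P Acc s₀ π :=
  let ⟨s, hreach, hrec⟩ := exists_reachable_isRecurrent hK s₀
  ⟨s, hreach, hrec, isEmptyElim⟩

end MDP

/-- Theorem 1: in the finite product MDP with reward `r_p > 0`
exactly on accepting transitions, assume Lemma 1 (every recurrent class under
any positional policy intersects either all accepting sets or none). If some
positional policy positively satisfies φ, then there is `γ* < 1` such that for
every `γ ∈ (γ*, 1)`, any positional policy maximizing the `γ`-discounted
expected reward from `s_init` positively satisfies φ. -/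
theorem optimal_policy_positively_satisfies {S A : Type}
    [Fintype S] [DecidableEq S] [Fintype A]
    (P : S → A → S → ℝ) (hP0 : ∀ s a s', 0 ≤ P s a s')
    (hP1 : ∀ s a, ∑ s', P s a s' = 1)
    {n : ℕ} (Acc : Fin n → Set (S × A × S)) (r_p : ℝ) (hr : 0 < r_p)
    (s_init : S)
    (hLemma1 : ∀ π : S → A, ∀ s : S, IsRecurrent (mdpKer P π) s →
      (∀ j : Fin n, ∃ s₁ s₂, (∃ k : ℕ, 0 < pstep (mdpKer P π) k s s₁) ∧
        0 < mdpKer P π s₁ s₂ ∧ (s₁, π s₁, s₂) ∈ Acc j) ∨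
      (∀ j : Fin n, ∀ s₁ s₂, (∃ k : ℕ, 0 < pstep (mdpKer P π) k s s₁) →
        0 < mdpKer P π s₁ s₂ → (s₁, π s₁, s₂) ∉ Acc j))
    (hexists : ∃ π : S → A, PositivelySatisfies P Acc s_init π) :
    ∃ γstar : ℝ, γstar < 1 ∧ ∀ γ : ℝ, γstar < γ → γ < 1 →
      ∀ πopt : S → A,
        (∀ π' : S → A, mdpVal P π' Acc r_p γ s_init ≤ mdpVal P πopt Acc r_p γ s_init) →
        PositivelySatisfies P Acc s_init πopt := by
  have hK := isKernel_mdpKer hP0 hP1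
  rcases isEmpty_or_nonempty (Fin n) with hn | hn
  · exact ⟨0, one_pos, fun _ _ _ πopt _ => positivelySatisfies_of_isEmpty (hK πopt)⟩
  obtain ⟨π₀, hπ₀⟩ := hexists
  obtain ⟨B, hB⟩ := exists_forall_mdpVal_le_of_not_positivelySatisfies (s₀ := s_init) hK hr.le
    hLemma1
  obtain ⟨γstar, hγstar, hgood⟩ := mem_nhdsLT_iff_exists_Ioo_subset.1
    ((tendsto_mdpVal_atTop (hK π₀) hr hπ₀).eventually_gt_atTop B)
  refine ⟨max γstar 0, max_lt hγstar one_pos, fun γ hγ hγ1 πopt hopt => ?_⟩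
  by_contra hbad
  have hγ0 : 0 ≤ γ := (le_max_right γstar 0).trans hγ.le
  have hπ₀γ : B < mdpVal P π₀ Acc r_p γ s_init := hgood ⟨(le_max_left γstar 0).trans_lt hγ, hγ1⟩
  exact (hB πopt hbad γ hγ0 hγ1).not_gt (hπ₀γ.trans_le (hopt π₀))
end
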